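/- Reaction Safety is strictly weaker than traditional safety in the following sense: there exist a future set F with |F| = 2 and a strategy σ satisfying Reaction Safety (each trajectory avoids its own future) such that no single trajectory in the range of σ avoids all futures; concretely, with X = ℝ, T = {0, 1}, objects O = {1}, futures f with f_1 ≡ 0 and g with g_1 ≡ 1, point collision volumes C_τ(t) = {τ(t)}, the strategy σ(f) ≡ 1, σ(g) ≡ 0 satisfies Reaction Safety but both σ(f) and σ(g) violate traditional safety against {f, g}. -/
import Mathlib


/-- Reaction Safety is strictly weaker than traditional safety:
a concrete two-future example where a strategy is reaction-safe but no trajectory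
in its range is traditionally safe. -/
theorem reaction_safety_strictly_weaker :
    ∃ σ : (Unit → ℝ → ℝ) → ℝ → ℝ,
      let f : Unit → ℝ → ℝ := fun _ _ => 0
      let g : Unit → ℝ → ℝ := fun _ _ => 1
      let F : Set (Unit → ℝ → ℝ) := {f, g}
      let C : (ℝ → ℝ) → ℝ → Set ℝ := fun τ t => {τ t}
      (σ f = fun _ => 1) ∧ (σ g = fun _ => 0) ∧
      -- Reaction Safety: each trajectory avoids its own future
      (∀ h ∈ F, ∀ t ∈ ({0, 1} : Set ℝ), ∀ i : Unit, C (σ h) t ∩ C (h i) t = ∅) ∧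
      -- no trajectory in the range of σ is traditionally safe against all futures
      (∀ h ∈ F, ¬ (∀ h' ∈ F, ∀ t ∈ ({0, 1} : Set ℝ), ∀ i : Unit,
        C (σ h) t ∩ C (h' i) t = ∅)) := by
  classical
  refine ⟨fun h => if h = (fun _ _ => 0) then (fun _ => 1) else (fun _ => 0), ?_⟩
  intro f g F C
  have hfg : f ≠ g := by
    intro h
    have := congrFun (congrFun h ()) 0
    simp [f, g] at this
  have hσf : (if f = (fun _ _ => (0:ℝ)) then (fun _ : ℝ => (1:ℝ)) else (fun _ : ℝ => 0)) = fun _ => 1 := by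
    simp [f]
  have hσg : (if g = (fun _ _ => (0:ℝ)) then (fun _ : ℝ => (1:ℝ)) else (fun _ : ℝ => 0)) = fun _ => 0 := by
    have : g ≠ (fun _ _ => (0:ℝ)) := fun h => hfg h.symm
    simp [this]
  refine ⟨hσf, hσg, ?_, ?_⟩
  · intro h hh t ht i
    rcases hh with rfl | rfl
    · simp only [hσf]; simp [C, f]
    · simp only [hσg]; simp [C, g]
  · intro h hh hsafe
    rcases hh with rfl | rfl
    · have := hsafe g (Or.inr rfl) 0 (Or.inl rfl) ()
      simp only [hσf] at this
      simp [C, g, Set.eq_empty_iff_forall_notMem] at this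
    · have := hsafe f (Or.inl rfl) 0 (Or.inl rfl) ()
      simp only [hσg] at this
      simp [C, f, Set.eq_empty_iff_forall_notMem] at this
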